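/- arXiv:1812.09486 — 3 statements merged into one kernel-verified Lean document; each statement's English description precedes it below -/
import Mathlib

section
/- Let H be a real inner product space, let G : H → H be a linear operator, and let φ : [0,T] → H and R : [0,T] → ℝ be differentiable, with W : [0,T] → H. Suppose the continuous SAV system holds: φ' (t) = −W(t), W(t) = G*G φ(t) + (R(t)/√(F₁(φ(t)))) N'(φ(t)), and R'(t) = ⟨N'(φ(t))/(2√(F₁(φ(t)))), φ'(t)⟩, where N'(φ(t)) ∈ H and F₁(φ(t)) > 0. Then the modified energy E(t) = ½‖Gφ(t)‖² + R(t)² − C₁ satisfies E'(t) = −‖W(t)‖² ≤ 0; in particular E is nonincreasing. -/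
open scoped RealInnerProductSpace

/-!
Since `GG` is `G*G`, differentiating `½‖Gφ‖²` along `φ' = -W` gives `-⟨G*G φ, W⟩`, and the
evolution law of `R` is chosen so that `(R²)' = -⟨(R/√F₁) N', W⟩`. The two add up to
`-⟨W, W⟩ = -‖W‖²`, and a function with nonpositive derivative is antitone.
-/

lemma antitoneOn_of_hasDerivAt_nonpos {D : Set ℝ} (hD : Convex ℝ D) {f f' : ℝ → ℝ}
    (hf : ∀ x ∈ D, HasDerivAt f (f' x) x) (hf'₀ : ∀ x ∈ D, f' x ≤ 0) : AntitoneOn f D :=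
  antitoneOn_of_hasDerivWithinAt_nonpos hD
    (fun x hx => (hf x hx).continuousAt.continuousWithinAt)
    (fun x hx => (hf x (interior_subset hx)).hasDerivWithinAt)
    (fun x hx => hf'₀ x (interior_subset hx))

section SAV

variable {H : Type*} [NormedAddCommGroup H] [InnerProductSpace ℝ H]
  {G GG : H →L[ℝ] H} {φ : ℝ → H} {R : ℝ → ℝ} {w n : H} {a t : ℝ}

lemma hasDerivAt_half_norm_sq_comp (hφ : HasDerivAt φ (-w) t) :
    HasDerivAt (fun s => (1 / 2) * ‖G (φ s)‖ ^ 2) (-⟪G (φ t), G w⟫) t := by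
  have hGφ : HasDerivAt (fun s => G (φ s)) (G (-w)) t := G.hasFDerivAt.comp_hasDerivAt t hφ
  refine (hGφ.norm_sq.const_mul (1 / 2 : ℝ)).congr_deriv ?_
  simp only [map_neg, inner_neg_right]
  ring

/-- In the SAV system `a = 1/(2√F₁)`, so that `2aR = R/√F₁`. -/
lemma hasDerivAt_sav_energy (C : ℝ) (hadj : ∀ x y : H, ⟪GG x, y⟫ = ⟪G x, G y⟫)
    (hφ : HasDerivAt φ (-w) t) (hR : HasDerivAt R ⟪a • n, -w⟫ t)
    (hw : w = GG (φ t) + (2 * a * R t) • n) :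
    HasDerivAt (fun s => (1 / 2) * ‖G (φ s)‖ ^ 2 + R s ^ 2 - C) (-‖w‖ ^ 2) t := by
  have hR2 : HasDerivAt (fun s => R s ^ 2) (-⟪(2 * a * R t) • n, w⟫) t := by
    refine (hR.fun_pow 2).congr_deriv ?_
    simp only [inner_neg_right, real_inner_smul_left]
    push_cast
    ring
  refine (((hasDerivAt_half_norm_sq_comp hφ).add hR2).sub_const C).congr_deriv ?_
  have hww : ‖w‖ ^ 2 = ⟪GG (φ t), w⟫ + ⟪(2 * a * R t) • n, w⟫ := by
    rw [← real_inner_self_eq_norm_sq]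
    nth_rewrite 1 [hw]
    rw [inner_add_left]
  rw [hww, hadj]
  ring

end SAV

theorem sav_continuous_energy_dissipation_general
    {H : Type*} [NormedAddCommGroup H] [InnerProductSpace ℝ H]
    (T C₁ : ℝ) (G GG : H →L[ℝ] H)
    (hadj : ∀ a b : H, ⟪GG a, b⟫ = ⟪G a, G b⟫)
    (φ W Np : ℝ → H) (Rv F1 : ℝ → ℝ)
    (hφ : ∀ t ∈ Set.Icc (0:ℝ) T, HasDerivAt φ (-(W t)) t)
    (hW : ∀ t ∈ Set.Icc (0:ℝ) T,
      W t = GG (φ t) + (Rv t / Real.sqrt (F1 t)) • Np t)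
    (hR : ∀ t ∈ Set.Icc (0:ℝ) T,
      HasDerivAt Rv ⟪(1 / (2 * Real.sqrt (F1 t))) • Np t, -(W t)⟫ t) :
    (∀ t ∈ Set.Icc (0:ℝ) T,
      HasDerivAt (fun s => (1/2) * ‖G (φ s)‖^2 + (Rv s)^2 - C₁) (-‖W t‖^2) t) ∧
    AntitoneOn (fun s => (1/2) * ‖G (φ s)‖^2 + (Rv s)^2 - C₁) (Set.Icc 0 T) := by
  have hE : ∀ t ∈ Set.Icc (0:ℝ) T,
      HasDerivAt (fun s => (1/2) * ‖G (φ s)‖^2 + (Rv s)^2 - C₁) (-‖W t‖^2) t := by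
    intro t ht
    refine hasDerivAt_sav_energy C₁ hadj (hφ t ht) (hR t ht) ?_
    rw [hW t ht]
    congr 2
    ring
  exact ⟨hE, antitoneOn_of_hasDerivAt_nonpos (convex_Icc 0 T) hE
    fun t _ => neg_nonpos.mpr (sq_nonneg _)⟩

/-- Energy dissipation law for the continuous SAV system: if `φ' = −W`,
`W = G*G φ + (R/√F₁) N'`, and `R' = ⟨N'/(2√F₁), φ'⟩`, then the modified energy
`E = ½‖Gφ‖² + R² − C₁` satisfies `E' = −‖W‖² ≤ 0`, so `E` is nonincreasing on `[0,T]`. -/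
theorem sav_continuous_energy_dissipation
    {H : Type*} [NormedAddCommGroup H] [InnerProductSpace ℝ H]
    (T C₁ : ℝ) (G GG : H →L[ℝ] H)
    (hadj : ∀ a b : H, ⟪GG a, b⟫ = ⟪G a, G b⟫)
    (φ W Np : ℝ → H) (Rv F1 : ℝ → ℝ)
    (hF1 : ∀ t ∈ Set.Icc (0:ℝ) T, 0 < F1 t)
    (hφ : ∀ t ∈ Set.Icc (0:ℝ) T, HasDerivAt φ (-(W t)) t)
    (hW : ∀ t ∈ Set.Icc (0:ℝ) T,
      W t = GG (φ t) + (Rv t / Real.sqrt (F1 t)) • Np t)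
    (hR : ∀ t ∈ Set.Icc (0:ℝ) T,
      HasDerivAt Rv ⟪(1 / (2 * Real.sqrt (F1 t))) • Np t, -(W t)⟫ t) :
    (∀ t ∈ Set.Icc (0:ℝ) T,
      HasDerivAt (fun s => (1/2) * ‖G (φ s)‖^2 + (Rv s)^2 - C₁) (-‖W t‖^2) t) ∧
    AntitoneOn (fun s => (1/2) * ‖G (φ s)‖^2 + (Rv s)^2 - C₁) (Set.Icc 0 T) :=
  sav_continuous_energy_dissipation_general T C₁ G GG hadj φ W Np Rv F1 hφ hW hR
end

section
/- Let H be a real inner product space and G a linear map with adjoint pairing ⟨G*Gu, v⟩ = ⟨Gu, Gv⟩. Suppose φⁿ, φⁿ⁺¹ ∈ H, Rⁿ, Rⁿ⁺¹ ∈ ℝ, u ∈ H, τ > 0, and W ∈ H satisfy: (φⁿ⁺¹ − φⁿ)/τ = −W; W = G*G · ((φⁿ⁺¹ + φⁿ)/2) + ((Rⁿ⁺¹ + Rⁿ)/2) u; and Rⁿ⁺¹ − Rⁿ = (1/2)⟨u, φⁿ⁺¹ − φⁿ⟩. Then ½(‖Gφⁿ⁺¹‖² − ‖Gφⁿ‖²)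 + (Rⁿ⁺¹)² − (Rⁿ)² = −τ‖W‖² ≤ 0. -/
open scoped RealInnerProductSpace

/-- Discrete energy dissipation identity for the SAV/Crank–Nicolson scheme:
if `(φⁿ⁺¹ − φⁿ)/τ = −W`, `W = G*G((φⁿ⁺¹+φⁿ)/2) + ((Rⁿ⁺¹+Rⁿ)/2)u`, and
`Rⁿ⁺¹ − Rⁿ = ½⟨u, φⁿ⁺¹ − φⁿ⟩`, then
`½(‖Gφⁿ⁺¹‖² − ‖Gφⁿ‖²) + (Rⁿ⁺¹)² − (Rⁿ)² = −τ‖W‖² ≤ 0`. -/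
theorem sav_cn_energy_identity
    {H : Type*} [NormedAddCommGroup H] [InnerProductSpace ℝ H]
    (G GG : H →ₗ[ℝ] H)
    (hadj : ∀ a b : H, ⟪GG a, b⟫ = ⟪G a, G b⟫)
    (φn φn1 u W : H) (Rn Rn1 τ : ℝ) (hτ : 0 < τ)
    (h1 : φn1 - φn = -(τ • W))
    (h2 : W = GG ((1/2 : ℝ) • (φn1 + φn)) + ((Rn1 + Rn) / 2) • u)
    (h3 : Rn1 - Rn = (1/2) * ⟪u, φn1 - φn⟫) :
    (1/2) * (‖G φn1‖^2 - ‖G φn‖^2) + Rn1^2 - Rn^2 = -(τ * ‖W‖^2) ∧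
      -(τ * ‖W‖^2) ≤ 0 := by
  have hG : ⟪GG ((1/2 : ℝ) • (φn1 + φn)), φn1 - φn⟫
      = (1/2) * (‖G φn1‖^2 - ‖G φn‖^2) := by
    rw [hadj]
    simp only [map_smul, map_add, map_sub, real_inner_smul_left, inner_add_left,
      inner_sub_right, real_inner_self_eq_norm_sq, real_inner_comm (G φn1) (G φn)]
    ring
  have hW : ⟪W, φn1 - φn⟫
      = (1/2) * (‖G φn1‖^2 - ‖G φn‖^2) + (Rn1^2 - Rn^2) := by
    rw [h2, inner_add_left, hG, real_inner_smul_left]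
    have : ⟪u, φn1 - φn⟫ = 2 * (Rn1 - Rn) := by rw [h3]; ring
    rw [this]; ring
  have hW2 : ⟪W, φn1 - φn⟫ = -(τ * ‖W‖^2) := by
    rw [h1, inner_neg_right, real_inner_smul_right, real_inner_self_eq_norm_sq]
  constructor
  · have := hW.symm.trans hW2
    linarith
  · have : 0 ≤ τ * ‖W‖^2 := by positivity
    linarith
end

section
/- With the hypotheses of the SAV/CN discrete energy identity (φⁿ⁺¹ − φⁿ = −τW, W = G*Gφ^{n+1/2} + R^{n+1/2}u, Rⁿ⁺¹ − Rⁿ = ½⟨u, φⁿ⁺¹ − φⁿ⟩, where φ^{n+1/2} = (φⁿ⁺¹+φⁿ)/2 and R^{n+1/2} = (Rⁿ⁺¹+Rⁿ)/2), the modified discrete energy Eⁿ = ½‖Gφⁿ‖² + (Rⁿ)² − C₁ satisfies Eⁿ⁺¹ ≤ Eⁿ for any time step τ > 0 (unconditional energy stability). -/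
open scoped RealInnerProductSpace

/-- Unconditional energy stability of the SAV/CN scheme: under the scheme equations,
the modified discrete energy `Eⁿ = ½‖Gφⁿ‖² + (Rⁿ)² − C₁` satisfies `Eⁿ⁺¹ ≤ Eⁿ`
for any time step `τ > 0`. -/
theorem sav_cn_unconditional_energy_stability
    {H : Type*} [NormedAddCommGroup H] [InnerProductSpace ℝ H]
    (G GG : H →ₗ[ℝ] H)
    (hadj : ∀ a b : H, ⟪GG a, b⟫ = ⟪G a, G b⟫)
    (φn φn1 u W : H) (Rn Rn1 τ C₁ : ℝ) (hτ : 0 < τ)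
    (h1 : φn1 - φn = -(τ • W))
    (h2 : W = GG ((1/2 : ℝ) • (φn1 + φn)) + ((Rn1 + Rn) / 2) • u)
    (h3 : Rn1 - Rn = (1/2) * ⟪u, φn1 - φn⟫) :
    (1/2) * ‖G φn1‖^2 + Rn1^2 - C₁ ≤ (1/2) * ‖G φn‖^2 + Rn^2 - C₁ := by
  have hWd : ⟪W, φn1 - φn⟫ = -(τ * ⟪W, W⟫) := by
    rw [h1, inner_neg_right, real_inner_smul_right]
  have hexp : ⟪W, φn1 - φn⟫ =
      (1/2) * (⟪G φn1, G φn1⟫ - ⟪G φn, G φn⟫) + ((Rn1 + Rn)/2) * ⟪u, φn1 - φn⟫ := by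
    rw [h2, inner_add_left, hadj]
    simp only [map_add, map_sub, map_smul, inner_add_left, inner_add_right,
      inner_sub_left, inner_sub_right, real_inner_smul_left, real_inner_smul_right,
      smul_eq_mul]
    rw [real_inner_comm (G φn) (G φn1)]
    ring
  have hnn : (0:ℝ) ≤ ⟪W, W⟫ := real_inner_self_nonneg
  have h4 : Rn1^2 - Rn^2 = ((Rn1+Rn)/2) * ⟪u, φn1 - φn⟫ := by 
    rw [show Rn1^2 - Rn^2 = (Rn1+Rn)*(Rn1-Rn) by ring, h3]; ring
  have hn1 : ⟪G φn1, G φn1⟫ = ‖G φn1‖^2 := real_inner_self_eq_norm_sq _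
  have hn : ⟪G φn, G φn⟫ = ‖G φn‖^2 := real_inner_self_eq_norm_sq _
  nlinarith [mul_nonneg hτ.le hnn]
end
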